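/- arXiv:1201.6580 — 10 statements merged into one kernel-verified Lean document; each statement's English description precedes it below -/
import Mathlib

section
/- For every natural number n, the number of permutations π of Fin n that avoid the pattern 312 (i.e., such that there are no indices i < j < k with π j < π k < π i) equals the n-th Catalan number. -/
/-- A permutation of `Fin n` avoids the pattern 312 if there are no indices
`i < j < k` with `π j < π k < π i`. -/
def Avoids312 {n : ℕ} (π : Equiv.Perm (Fin n)) : Prop :=
  ∀ i j k : Fin n, i < j → j < k → ¬(π j < π k ∧ π k < π i)

/-!
Deleting the entry `0` of a 312-avoiding permutation `π` of `Fin (n + 1)`, say at position `m`,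
leaves a permutation `ρ` of `Fin n` in which every entry before position `m` is smaller than every
entry after it: a larger entry before `m` and a smaller one after it would form a 312 together with
the `0`. Such a `ρ` is a direct sum `σ ⊕ τ` of permutations of sizes `m` and `n - m`, and `π`
avoids 312 exactly when `σ` and `τ` do, since no occurrence of 312 can straddle the cut. This is
the Catalan recurrence `C (n + 1) = ∑ m, C m * C (n - m)`.
-/

open Equiv Equiv.Perm

section Pattern

variable {α β γ : Type*}

def AvoidsPattern312 [Preorder α] [Preorder β] (f : α → β) : Prop :=
  ∀ i j k : α, i < j → j < k → ¬(f j < f k ∧ f k < f i)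

theorem avoids312_iff_avoidsPattern312 {n : ℕ} (π : Perm (Fin n)) :
    Avoids312 π ↔ AvoidsPattern312 π :=
  Iff.rfl

theorem AvoidsPattern312.comp_strictMono [Preorder α] [Preorder β] [Preorder γ] {f : α → β}
    (hf : AvoidsPattern312 f) {g : γ → α} (hg : StrictMono g) : AvoidsPattern312 (f ∘ g) :=
  fun _ _ _ hij hjk => hf _ _ _ (hg hij) (hg hjk)

theorem StrictMono.avoidsPattern312_comp_iff [Preorder α] [LinearOrder β] [Preorder γ]
    {h : β → γ} (hh : StrictMono h) {f : α → β} :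
    AvoidsPattern312 (h ∘ f) ↔ AvoidsPattern312 f := by
  simp only [AvoidsPattern312, Function.comp_apply, hh.lt_iff_lt]

end Pattern

namespace Equiv.Perm

variable {n a b : ℕ}

def SplitsAt (ρ : Perm (Fin n)) (c : ℕ) : Prop :=
  ∀ i k : Fin n, (i : ℕ) < c → c ≤ (k : ℕ) → ρ i < ρ k

theorem SplitsAt.apply_lt_of_lt {ρ : Perm (Fin n)} {c : ℕ} (h : SplitsAt ρ c) {i : Fin n}
    (hi : (i : ℕ) < c) : (ρ i : ℕ) < c := by
  -- Pigeonhole: otherwise some `v < c` sits at a position `k ≥ c`, and `ρ i < v < c ≤ ρ i`.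
  by_contra hci
  set A : Finset (Fin n) := Finset.univ.filter fun x => (x : ℕ) < c
  have hnot : ¬ A.map ρ.toEmbedding ⊆ A := fun hs =>
    hci (by simpa [A] using hs (Finset.mem_map_of_mem ρ.toEmbedding (by simp [A, hi])))
  obtain ⟨v, hvA, hvρ⟩ : ∃ v ∈ A, v ∉ A.map ρ.toEmbedding := by
    by_contra! hsub
    exact hnot (Finset.eq_of_subset_of_card_le hsub (by simp)).ge
  have hk : c ≤ (ρ.symm v : ℕ) := by
    by_contra! hk
    exact hvρ (Finset.mem_map.mpr ⟨ρ.symm v, by simp [A, hk], by simp⟩)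
  have := h i _ hi hk
  simp only [apply_symm_apply, Fin.lt_def] at this
  simp only [A, Finset.mem_filter] at hvA
  omega

def insertMin (m : Fin (n + 1)) (ρ : Perm (Fin n)) : Perm (Fin (n + 1)) :=
  (finSuccEquiv' m).trans (ρ.optionCongr.trans (finSuccEquiv n).symm)

@[simp]
theorem insertMin_self (m : Fin (n + 1)) (ρ : Perm (Fin n)) : insertMin m ρ m = 0 := by
  simp [insertMin]

@[simp]
theorem insertMin_succAbove (m : Fin (n + 1)) (ρ : Perm (Fin n)) (i : Fin n) :
    insertMin m ρ (m.succAbove i) = (ρ i).succ := by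
  simp [insertMin]

theorem insertMin_comp_succAbove (m : Fin (n + 1)) (ρ : Perm (Fin n)) :
    insertMin m ρ ∘ m.succAbove = Fin.succ ∘ ρ :=
  funext (insertMin_succAbove m ρ)

theorem insertMin_injective (m : Fin (n + 1)) : Function.Injective (insertMin m) := by
  intro ρ ρ' h
  ext1 i
  simpa using DFunLike.congr_fun h (m.succAbove i)

theorem exists_insertMin_eq {m : Fin (n + 1)} {π : Perm (Fin (n + 1))} (hπ : π m = 0) :
    ∃ ρ, insertMin m ρ = π := by
  have hne (i : Fin n) : π (m.succAbove i) ≠ 0 := by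
    rw [← hπ]; exact π.injective.ne (m.succAbove_ne i)
  have hinj : Function.Injective fun i => (π (m.succAbove i)).pred (hne i) := fun i j h => by
    simpa using h
  refine ⟨ofBijective _ hinj.bijective_of_finite, ext fun x => ?_⟩
  rcases eq_or_ne x m with rfl | hx
  · simp [hπ]
  · obtain ⟨i, rfl⟩ := Fin.exists_succAbove_eq hx
    simp

theorem avoids312_insertMin_iff {m : Fin (n + 1)} {ρ : Perm (Fin n)} :
    Avoids312 (insertMin m ρ) ↔ Avoids312 ρ ∧ SplitsAt ρ m := by
  have hleft (i : Fin n) : m.succAbove i < m ↔ (i : ℕ) < m := by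
    rw [Fin.succAbove_lt_iff_castSucc_lt, Fin.lt_def, Fin.val_castSucc]
  have hright (k : Fin n) : m < m.succAbove k ↔ (m : ℕ) ≤ k := by
    rw [Fin.lt_succAbove_iff_le_castSucc, Fin.le_def, Fin.val_castSucc]
  constructor
  · intro h
    refine ⟨?_, fun i k hi hk => ?_⟩
    · rw [avoids312_iff_avoidsPattern312, ← Fin.strictMono_succ.avoidsPattern312_comp_iff,
        ← insertMin_comp_succAbove m]
      exact AvoidsPattern312.comp_strictMono h (Fin.strictMono_succAbove m)
    · have hne : ρ i ≠ ρ k := ρ.injective.ne (Fin.ne_of_val_ne (by omega))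
      refine lt_of_le_of_ne (not_lt.mp fun hki => ?_) hne
      refine h _ m _ ((hleft i).mpr hi) ((hright k).mpr hk) ?_
      simp only [insertMin_self, insertMin_succAbove, Fin.succ_lt_succ_iff]
      exact ⟨Fin.succ_pos _, hki⟩
  · rintro ⟨hρ, hsplit⟩ i j k hij hjk ⟨hjk', hki⟩
    have hk : k ≠ m := by rintro rfl; simp at hjk'
    have hi : i ≠ m := by rintro rfl; simp at hki
    obtain ⟨k, rfl⟩ := Fin.exists_succAbove_eq hk
    obtain ⟨i, rfl⟩ := Fin.exists_succAbove_eq hi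
    rcases eq_or_ne j m with rfl | hj
    · simp only [insertMin_succAbove, Fin.succ_lt_succ_iff] at hki
      exact (hsplit i k ((hleft i).mp hij) ((hright k).mp hjk)).not_gt hki
    · obtain ⟨j, rfl⟩ := Fin.exists_succAbove_eq hj
      simp only [insertMin_succAbove, Fin.succ_lt_succ_iff,
        (Fin.strictMono_succAbove m).lt_iff_lt] at *
      exact hρ i j k hij hjk ⟨hjk', hki⟩

def directSum (σ : Perm (Fin a)) (τ : Perm (Fin b)) : Perm (Fin (a + b)) :=
  finSumFinEquiv.permCongr (σ.sumCongr τ)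

@[simp]
theorem directSum_castAdd (σ : Perm (Fin a)) (τ : Perm (Fin b)) (i : Fin a) :
    directSum σ τ (Fin.castAdd b i) = Fin.castAdd b (σ i) := by
  simp [directSum]

@[simp]
theorem directSum_natAdd (σ : Perm (Fin a)) (τ : Perm (Fin b)) (j : Fin b) :
    directSum σ τ (Fin.natAdd a j) = Fin.natAdd a (τ j) := by
  simp [directSum]

theorem directSum_injective :
    Function.Injective fun στ : Perm (Fin a) × Perm (Fin b) => directSum στ.1 στ.2 :=
  finSumFinEquiv.permCongr.injective.comp sumCongrHom_injective

theorem SplitsAt.exists_directSum_eq {ρ : Perm (Fin (a + b))} (h : SplitsAt ρ a) :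
    ∃ σ τ, directSum σ τ = ρ := by
  have hinl : Set.MapsTo (finSumFinEquiv.symm.permCongr ρ) (Set.range Sum.inl)
      (Set.range Sum.inl) := by
    rintro _ ⟨i, rfl⟩
    refine ⟨Fin.castLT (ρ (Fin.castAdd b i)) (h.apply_lt_of_lt i.isLt), ?_⟩
    simp [← finSumFinEquiv_symm_apply_castAdd]
  obtain ⟨⟨σ, τ⟩, hστ⟩ := mem_sumCongrHom_range_of_perm_mapsTo_inl hinl
  refine ⟨σ, τ, ?_⟩
  rw [sumCongrHom_apply] at hστ
  rw [directSum, hστ, ← permCongr_symm, apply_symm_apply]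

theorem splitsAt_directSum (σ : Perm (Fin a)) (τ : Perm (Fin b)) :
    SplitsAt (directSum σ τ) a := by
  intro i k hi hk
  induction i using Fin.addCases <;> induction k using Fin.addCases <;>
    simp only [directSum_castAdd, directSum_natAdd, Fin.lt_def, Fin.val_castAdd,
      Fin.val_natAdd] at * <;>
    omega

theorem avoids312_directSum_iff {σ : Perm (Fin a)} {τ : Perm (Fin b)} :
    Avoids312 (directSum σ τ) ↔ Avoids312 σ ∧ Avoids312 τ := by
  simp only [avoids312_iff_avoidsPattern312]
  refine ⟨fun h => ⟨?_, ?_⟩, fun ⟨hσ, hτ⟩ => ?_⟩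
  · rw [← (Fin.strictMono_castAdd b).avoidsPattern312_comp_iff]
    convert h.comp_strictMono (Fin.strictMono_castAdd b) using 1
    ext1 i; simp
  · rw [← (Fin.strictMono_natAdd a).avoidsPattern312_comp_iff]
    convert h.comp_strictMono (Fin.strictMono_natAdd a) using 1
    ext1 i; simp
  · intro i j k
    induction i using Fin.addCases <;> induction j using Fin.addCases <;>
      induction k using Fin.addCases <;>
      simp only [directSum_castAdd, directSum_natAdd]
    -- In the mixed cases either the positions are out of order or a value on the left of the cut
    -- exceeds one on the right.
    all_goals
      simp only [(Fin.strictMono_castAdd b).lt_iff_lt, (Fin.strictMono_natAdd a).lt_iff_lt]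
      first
        | exact hσ _ _ _
        | exact hτ _ _ _
        | simp only [Fin.lt_def, Fin.val_castAdd, Fin.val_natAdd]; omega

end Equiv.Perm

theorem card_avoids312_apply_eq_zero {n : ℕ} (m : Fin (n + 1)) :
    Nat.card {π : Perm (Fin (n + 1)) // Avoids312 π ∧ π m = 0} =
      Nat.card {σ : Perm (Fin m) // Avoids312 σ} *
        Nat.card {τ : Perm (Fin (n - m)) // Avoids312 τ} := by
  obtain ⟨a, ha⟩ := m
  obtain ⟨b, rfl⟩ := Nat.exists_eq_add_of_le (Nat.lt_succ_iff.mp ha)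
  rw [Fin.val_mk, Nat.add_sub_cancel_left, ← Nat.card_prod]
  symm
  refine Nat.card_eq_of_bijective
    (fun στ => ⟨insertMin ⟨a, ha⟩ (directSum στ.1.1 στ.2.1),
      avoids312_insertMin_iff.mpr ⟨avoids312_directSum_iff.mpr ⟨στ.1.2, στ.2.2⟩,
        splitsAt_directSum _ _⟩, insertMin_self _ _⟩) ⟨fun στ στ' h => ?_, fun π => ?_⟩
  · have : (στ.1.1, στ.2.1) = (στ'.1.1, στ'.2.1) :=
      directSum_injective (insertMin_injective _ (congrArg Subtype.val h))
    exact Prod.ext (Subtype.ext (congrArg Prod.fst this)) (Subtype.ext (congrArg Prod.snd this))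
  · obtain ⟨π, hπ, hπm⟩ := π
    obtain ⟨ρ, rfl⟩ := exists_insertMin_eq hπm
    obtain ⟨hρ, hsplit⟩ := avoids312_insertMin_iff.mp hπ
    obtain ⟨σ, τ, rfl⟩ := SplitsAt.exists_directSum_eq hsplit
    obtain ⟨hσ, hτ⟩ := avoids312_directSum_iff.mp hρ
    exact ⟨⟨⟨σ, hσ⟩, ⟨τ, hτ⟩⟩, rfl⟩

theorem card_avoids312_succ (n : ℕ) :
    Nat.card {π : Perm (Fin (n + 1)) // Avoids312 π} =
      ∑ m : Fin (n + 1), Nat.card {σ : Perm (Fin m) // Avoids312 σ} *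
        Nat.card {τ : Perm (Fin (n - m)) // Avoids312 τ} := by
  calc Nat.card {π : Perm (Fin (n + 1)) // Avoids312 π}
      = Nat.card (Σ m, {π : {π : Perm (Fin (n + 1)) // Avoids312 π} // π.1.symm 0 = m}) :=
        Nat.card_congr (Equiv.sigmaFiberEquiv _).symm
    _ = ∑ m : Fin (n + 1), Nat.card {π : Perm (Fin (n + 1)) // Avoids312 π ∧ π m = 0} := by
        rw [Nat.card_sigma]
        refine Finset.sum_congr rfl fun m _ => Nat.card_congr ?_
        exact (subtypeSubtypeEquivSubtypeInter Avoids312 fun π => π.symm 0 = m).trans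
          (subtypeEquivRight fun π => by rw [symm_apply_eq, eq_comm])
    _ = _ := Finset.sum_congr rfl fun m _ => card_avoids312_apply_eq_zero m

theorem card_avoids312_eq_catalan (n : ℕ) :
    Nat.card {π : Equiv.Perm (Fin n) // Avoids312 π} = catalan n := by
  induction n using Nat.strong_induction_on with
  | _ n ih =>
    cases n with
    | zero =>
      rw [catalan_zero, Nat.card_eq_one_iff_unique]
      exact ⟨inferInstance, ⟨⟨1, fun i => i.elim0⟩⟩⟩
    | succ n =>
      rw [card_avoids312_succ, catalan_succ]
      exact Finset.sum_congr rfl fun m _ => by rw [ih m (by omega), ih (n - m) (by omega)]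
end

section
/- For every natural number n, the number of permutations π of Fin n that avoid the pattern 321 (i.e., such that there are no indices i < j < k with π i > π j > π k) equals the n-th Catalan number. -/
/-- A permutation of `Fin n` avoids the pattern 321 if there are no indices
`i < j < k` with `π i > π j > π k`. -/
def Avoids321 {n : ℕ} (π : Equiv.Perm (Fin n)) : Prop :=
  ∀ i j k : Fin n, i < j → j < k → ¬(π j < π i ∧ π k < π j)

/-!
In a 321-avoiding permutation `π` both the excedances (`i < π i`) and the remaining points form
increasing subsequences, so `π` is determined by its set `S` of excedance positions and its set
`T = π '' S` of excedance values, and the pairs `(S, T)` that occur are exactly those with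
`#S = #T` and `#{t ∈ T | t ≤ x} ≤ #{s ∈ S | s < x}` for all `x`. Writing, for `x = 0, …, n - 1`,
a down step if `x ∈ T` (else an up step) followed by an up step if `x ∈ S` (else a down step)
turns this condition into the Dyck condition; the down step comes first because an excedance
`s < π s` must be opened strictly before it is closed. This identifies 321-avoiding permutations
with Dyck words of semilength `n`, of which there are `catalan n`.
-/

open Finset DyckStep Equiv

section LinearOrder

variable {α : Type*} [LinearOrder α]

theorem StrictMonoOn.eqOn_of_image_eq [WellFoundedLT α] {β : Type*} [Preorder β]
    {f g : α → β} {s : Set α} (hf : StrictMonoOn f s) (hg : StrictMonoOn g s)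
    (h : f '' s = g '' s) : s.EqOn f g := fun x hx =>
  congrArg (fun e : s ≃o f '' s => (e ⟨x, hx⟩ : β))
    (Subsingleton.elim (hf.orderIso f s)
      ((hg.orderIso g s).trans (OrderIso.setCongr _ _ h.symm)))

variable {A B : Finset α}

theorem card_filter_le_orderIso_apply (e : A ≃o B) (a : A) :
    #{b ∈ B | b ≤ (e a : α)} = #{x ∈ A | x ≤ (a : α)} := by
  refine card_bij' (fun b hb => (e.symm ⟨b, (mem_filter.1 hb).1⟩ : α))
    (fun x hx => (e ⟨x, (mem_filter.1 hx).1⟩ : α)) ?_ ?_ ?_ ?_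
  · intro b hb
    simp only [mem_filter] at hb ⊢
    exact ⟨Subtype.prop _, e.symm_apply_le.2 hb.2⟩
  · intro x hx
    simp only [mem_filter] at hx ⊢
    exact ⟨Subtype.prop _, Subtype.coe_le_coe.2 (e.le_iff_le.2 hx.2)⟩
  · simp
  · simp

theorem lt_orderIso_apply (e : A ≃o B) (h : ∀ x, #{b ∈ B | b ≤ x} ≤ #{a ∈ A | a < x})
    (a : A) : (a : α) < e a := by
  by_contra! hle
  have h1 := h (e a)
  rw [card_filter_le_orderIso_apply] at h1
  have h2 : #{x ∈ A | x < (e a : α)} < #{x ∈ A | x ≤ (a : α)} := by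
    refine card_lt_card ((ssubset_iff_of_subset ?_).2 ⟨a, by simp, by simp [hle]⟩)
    exact monotone_filter_right _ fun x _ hx => hx.le.trans hle
  omega

theorem le_orderIso_apply (e : A ≃o B) (h : ∀ x, #{b ∈ B | b ≤ x} ≤ #{a ∈ A | a ≤ x})
    (a : A) : (a : α) ≤ e a := by
  by_contra! hlt
  have h1 := h (e a)
  rw [card_filter_le_orderIso_apply] at h1
  have h2 : #{x ∈ A | x ≤ (e a : α)} < #{x ∈ A | x ≤ (a : α)} := by
    refine card_lt_card ((ssubset_iff_of_subset ?_).2 ⟨a, by simp, by simp [hlt]⟩)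
    exact monotone_filter_right _ fun x _ hx => hx.trans hlt.le
  omega

def Dominates (S T : Finset α) : Prop :=
  #S = #T ∧ ∀ x, #{t ∈ T | t ≤ x} ≤ #{s ∈ S | s < x}

theorem card_filter_add_card_filter_compl [Fintype α] (S : Finset α) (p : α → Prop)
    [DecidablePred p] : #{x ∈ S | p x} + #{x ∈ Sᶜ | p x} = #{x | p x} := by
  rw [← card_union_of_disjoint (disjoint_filter_filter disjoint_compl_right), ← filter_union,
    union_compl]

theorem Dominates.compl [Fintype α] {S T : Finset α} (h : Dominates S T) (x : α) :
    #{c ∈ Sᶜ | c ≤ x} ≤ #{c ∈ Tᶜ | c ≤ x} := by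
  have hS := card_filter_add_card_filter_compl S (· ≤ x)
  have hT := card_filter_add_card_filter_compl T (· ≤ x)
  have hlt : #{s ∈ S | s < x} ≤ #{s ∈ S | s ≤ x} :=
    card_le_card (monotone_filter_right _ fun _ _ => le_of_lt)
  have := h.2 x
  omega

end LinearOrder

theorem List.take_two_mul_flatMap {α β : Type*} {f : α → List β} (hf : ∀ a, (f a).length = 2)
    (L : List α) (k : ℕ) : (L.flatMap f).take (2 * k) = (L.take k).flatMap f := by
  induction L generalizing k with
  | nil => simp
  | cons a L ih =>
    cases k with
    | zero => simp
    | succ k => simp [List.take_append, hf, Nat.mul_succ, ih]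

theorem List.take_two_mul_add_one_flatMap {α β : Type*} {f : α → List β}
    (hf : ∀ a, (f a).length = 2) {L : List α} {k : ℕ} (hk : k < L.length) :
    (L.flatMap f).take (2 * k + 1) = (L.take k).flatMap f ++ (f L[k]).take 1 := by
  induction L generalizing k with
  | nil => simp at hk
  | cons a L ih =>
    cases k with
    | zero => simp [List.take_append, hf]
    | succ k =>
      rw [show 2 * (k + 1) + 1 = (f a).length + (2 * k + 1) by rw [hf]; ring, List.flatMap_cons,
        List.take_length_add_append, ih (Nat.lt_of_succ_lt_succ hk)]
      simp

theorem List.forall_mem_eq_of_flatMap_eq {α β : Type*} {f g : α → List β}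
    (hfg : ∀ a, (f a).length = (g a).length) {L : List α} (h : L.flatMap f = L.flatMap g) :
    ∀ a ∈ L, f a = g a := by
  induction L with
  | nil => simp
  | cons a L ih =>
    obtain ⟨ha, hL⟩ := List.append_inj h (hfg a)
    simpa [ha] using ih hL

def IsDyckWord (w : List DyckStep) : Prop :=
  w.count U = w.count D ∧ ∀ i, (w.take i).count D ≤ (w.take i).count U

section StepPair

variable {α : Type*} [DecidableEq α] (S T : Finset α)

def stepPair (x : α) : List DyckStep :=
  [if x ∈ T then D else U, if x ∈ S then U else D]

theorem count_U_flatMap_stepPair (L : List α) :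
    (L.flatMap (stepPair S T)).count U + L.countP (· ∈ T) = L.length + L.countP (· ∈ S) := by
  induction L with
  | nil => simp
  | cons x L ih =>
    simp only [List.flatMap_cons, List.count_append, List.countP_cons, List.length_cons,
      stepPair]
    by_cases hT : x ∈ T <;> by_cases hS : x ∈ S <;> simp [hT, hS] <;> omega

theorem count_D_flatMap_stepPair (L : List α) :
    (L.flatMap (stepPair S T)).count D + L.countP (· ∈ S) = L.length + L.countP (· ∈ T) := by
  induction L with
  | nil => simp
  | cons x L ih =>
    simp only [List.flatMap_cons, List.count_append, List.countP_cons, List.length_cons,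
      stepPair]
    by_cases hT : x ∈ T <;> by_cases hS : x ∈ S <;> simp [hT, hS] <;> omega

theorem count_D_le_count_U_take_odd_iff {L : List α} {k : ℕ} (hk : k < L.length) :
    ((L.flatMap (stepPair S T)).take (2 * k + 1)).count D ≤
        ((L.flatMap (stepPair S T)).take (2 * k + 1)).count U ↔
      (L.take (k + 1)).countP (· ∈ T) ≤ (L.take k).countP (· ∈ S) := by
  have hU := count_U_flatMap_stepPair S T (L.take k)
  have hD := count_D_flatMap_stepPair S T (L.take k)
  rw [List.take_two_mul_add_one_flatMap (fun _ => rfl) hk, List.count_append, List.count_append,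
    List.take_add_one (l := L), List.getElem?_eq_getElem hk, List.countP_append]
  by_cases hT : L[k] ∈ T <;> simp [stepPair, hT] at hU hD ⊢ <;> omega

theorem isDyckWord_flatMap_stepPair_iff (L : List α) :
    IsDyckWord (L.flatMap (stepPair S T)) ↔
      L.countP (· ∈ S) = L.countP (· ∈ T) ∧
        ∀ k < L.length, (L.take (k + 1)).countP (· ∈ T) ≤ (L.take k).countP (· ∈ S) := by
  have hU := count_U_flatMap_stepPair S T L
  have hD := count_D_flatMap_stepPair S T L
  refine ⟨fun ⟨htot, hpre⟩ => ⟨by omega, fun k hk => (count_D_le_count_U_take_odd_iff S T hk).1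
    (hpre _)⟩, fun ⟨htot, hpre⟩ => ⟨by omega, fun i => ?_⟩⟩
  rcases le_or_gt (2 * L.length) i with hi | hi
  · rw [List.take_of_length_le (by simpa [stepPair, mul_comm] using hi)]
    omega
  obtain ⟨k, rfl | rfl⟩ := Nat.even_or_odd' i
  · rw [List.take_two_mul_flatMap (fun _ => rfl)]
    have hUk := count_U_flatMap_stepPair S T (L.take k)
    have hDk := count_D_flatMap_stepPair S T (L.take k)
    cases k with
    | zero => simp
    | succ k =>
      have := hpre k (by omega)
      have hmono := (List.take_sublist_take_left (l := L) (Nat.le_add_right k 1)).countP_le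
        (p := fun x => decide (x ∈ S))
      omega
  · exact (count_D_le_count_U_take_odd_iff S T (by omega)).2 (hpre k (by omega))

end StepPair

instance : Fintype DyckStep := ⟨{U, D}, fun s => by cases s <;> simp⟩

section DyckEncode

variable {n : ℕ}

def dyckEncode (S T : Finset (Fin n)) : List DyckStep :=
  (List.finRange n).flatMap (stepPair S T)

theorem length_dyckEncode (S T : Finset (Fin n)) : (dyckEncode S T).length = 2 * n := by
  simp [dyckEncode, stepPair, mul_comm]

theorem countP_mem_take_finRange (S : Finset (Fin n)) (k : ℕ) :
    ((List.finRange n).take k).countP (· ∈ S) = #{s ∈ S | s.val < k} := by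
  rw [List.countP_eq_length_filter, ← List.toFinset_card_of_nodup
    (((List.nodup_finRange n).sublist (List.take_sublist _ _)).filter _)]
  congr 1
  ext x
  simp only [List.mem_toFinset, List.mem_filter, List.mem_take_iff_getElem, List.getElem_finRange,
    List.length_finRange, decide_eq_true_eq, Finset.mem_filter]
  constructor
  · rintro ⟨⟨j, hj, rfl⟩, hS⟩
    exact ⟨hS, (lt_min_iff.1 hj).1⟩
  · rintro ⟨hS, hk⟩
    exact ⟨⟨x, by omega, rfl⟩, hS⟩

theorem countP_mem_finRange (S : Finset (Fin n)) : (List.finRange n).countP (· ∈ S) = #S := by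
  simpa [filter_true_of_mem, List.take_of_length_le] using countP_mem_take_finRange S n

theorem isDyckWord_dyckEncode_iff (S T : Finset (Fin n)) :
    IsDyckWord (dyckEncode S T) ↔ Dominates S T := by
  rw [dyckEncode, isDyckWord_flatMap_stepPair_iff, Dominates, Fin.forall_iff]
  simp only [countP_mem_finRange, countP_mem_take_finRange, List.length_finRange,
    Nat.lt_add_one_iff, Fin.le_def, Fin.lt_def]

theorem dyckEncode_inj {S T S' T' : Finset (Fin n)} :
    dyckEncode S T = dyckEncode S' T' ↔ S = S' ∧ T = T' := by
  refine ⟨fun h => ?_, fun h => h.1 ▸ h.2 ▸ rfl⟩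
  have := List.forall_mem_eq_of_flatMap_eq (f := stepPair S T) (g := stepPair S' T')
    (fun _ => rfl) h
  simp only [stepPair, List.cons.injEq, and_true] at this
  refine ⟨Finset.ext fun a => ?_, Finset.ext fun a => ?_⟩
  · have := (this a (List.mem_finRange a)).2
    by_cases a ∈ S <;> by_cases a ∈ S' <;> simp_all
  · have := (this a (List.mem_finRange a)).1
    by_cases a ∈ T <;> by_cases a ∈ T' <;> simp_all

theorem exists_dyckEncode_eq {w : List DyckStep} (hw : w.length = 2 * n) :
    ∃ S T : Finset (Fin n), dyckEncode S T = w := by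
  -- `dyckEncode` is an injection between two types with `4 ^ n` elements
  let f : Finset (Fin n) × Finset (Fin n) → List.Vector DyckStep (2 * n) :=
    fun ST => ⟨dyckEncode ST.1 ST.2, length_dyckEncode _ _⟩
  have hf : f.Bijective := by
    refine (Fintype.bijective_iff_injective_and_card f).2 ⟨fun a b h => Prod.ext_iff.2
      (dyckEncode_inj.1 (congrArg Subtype.val h)), ?_⟩
    simp [card_vector, pow_mul', ← pow_two, show Fintype.card DyckStep = 2 from rfl]
  obtain ⟨⟨S, T⟩, h⟩ := hf.2 ⟨w, hw⟩
  exact ⟨S, T, congrArg Subtype.val h⟩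

def dyckWordOfDominates {S T : Finset (Fin n)} (h : Dominates S T) : DyckWord :=
  ⟨dyckEncode S T, ((isDyckWord_dyckEncode_iff S T).2 h).1,
    ((isDyckWord_dyckEncode_iff S T).2 h).2⟩

theorem semilength_dyckWordOfDominates {S T : Finset (Fin n)} (h : Dominates S T) :
    (dyckWordOfDominates h).semilength = n := by
  have : 2 * (dyckWordOfDominates h).semilength = 2 * n :=
    (dyckWordOfDominates h).two_mul_semilength_eq_length.trans (length_dyckEncode S T)
  omega

end DyckEncode

section PiecewisePerm

variable {α : Type*} [Fintype α] [DecidableEq α] {S T : Finset α}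

def piecewisePerm (e : S ≃ T) (f : ↥Sᶜ ≃ ↥Tᶜ) : Perm α :=
  Equiv.subtypeCongr e
    ((subtypeEquivRight fun _ => mem_compl).symm.trans
      (f.trans (subtypeEquivRight fun _ => mem_compl)))

theorem piecewisePerm_apply_of_mem (e : S ≃ T) (f : ↥Sᶜ ≃ ↥Tᶜ) {x : α} (hx : x ∈ S) :
    piecewisePerm e f x = e ⟨x, hx⟩ := by
  simp [piecewisePerm, Equiv.subtypeCongr, hx]

theorem piecewisePerm_apply_of_notMem (e : S ≃ T) (f : ↥Sᶜ ≃ ↥Tᶜ) {x : α} (hx : x ∉ S) :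
    piecewisePerm e f x = f ⟨x, mem_compl.2 hx⟩ := by
  simp only [piecewisePerm, Equiv.subtypeCongr, trans_apply, sumCompl_symm_apply_of_neg hx,
    sumCongr_apply, Sum.map_inr, sumCompl_apply_inr]
  rfl

end PiecewisePerm

section Excedances

variable {n : ℕ} {π ρ : Perm (Fin n)}

def excedances (π : Perm (Fin n)) : Finset (Fin n) := {i | i < π i}

def excedanceValues (π : Perm (Fin n)) : Finset (Fin n) := (excedances π).map π.toEmbedding

@[simp] theorem mem_excedances {i : Fin n} : i ∈ excedances π ↔ i < π i := by
  simp [excedances]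

theorem dominates_excedances (π : Perm (Fin n)) :
    Dominates (excedances π) (excedanceValues π) := by
  refine ⟨(card_map _).symm, fun x => ?_⟩
  rw [excedanceValues, filter_map, card_map]
  exact card_le_card (monotone_filter_right _ fun i hi hix => (mem_excedances.1 hi).trans_le hix)

theorem Avoids321.symm (hπ : Avoids321 π) : Avoids321 π.symm :=
  fun _ _ _ hij hjk ⟨hji, hkj⟩ => hπ _ _ _ hkj hji (by simpa using ⟨hjk, hij⟩)

theorem Avoids321.apply_lt_apply_of_le_apply (hπ : Avoids321 π) {i j : Fin n} (hij : i < j)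
    (hj : j ≤ π j) : π i < π j := by
  by_contra! hji
  replace hji : π j < π i := hji.lt_of_ne (π.injective.ne hij.ne')
  -- the `π j` points with a value below `π j` sit at positions in `[0, j)` other than `i`
  have hsub : ({k | π k < π j} : Finset (Fin n)) ⊆ (Iio j).erase i := by
    intro k hk
    rw [mem_filter_univ] at hk
    refine mem_erase.2 ⟨?_, mem_Iio.2 ?_⟩
    · rintro rfl
      exact hk.not_gt hji
    · by_contra! hjk
      rcases hjk.lt_or_eq with hjk | rfl
      · exact hπ i j k hij hjk ⟨hji, hk⟩
      · exact hk.false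
  have hcard : #{k | π k < π j} = π j := by
    rw [← Fin.card_Iio (π j)]
    exact card_equiv π (by simp)
  have := card_le_card hsub
  rw [hcard, card_erase_of_mem (mem_Iio.2 hij), Fin.card_Iio] at this
  have := Fin.le_def.1 hj
  have := Fin.lt_def.1 hij
  omega

theorem Avoids321.apply_lt_apply_of_apply_le (hπ : Avoids321 π) {j k : Fin n} (hjk : j < k)
    (hj : π j ≤ j) : π j < π k := by
  by_contra! hkj
  replace hkj : π k < π j := hkj.lt_of_ne (π.injective.ne hjk.ne')
  have := hπ.symm.apply_lt_apply_of_le_apply hkj (by simpa using hj)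
  simp only [symm_apply_apply] at this
  exact this.not_gt hjk

theorem avoids321_iff_strictMonoOn :
    Avoids321 π ↔ StrictMonoOn π ↑(excedances π) ∧ StrictMonoOn π (↑(excedances π))ᶜ := by
  simp only [StrictMonoOn, Set.mem_compl_iff, mem_coe, mem_excedances, not_lt]
  constructor
  · intro hπ
    exact ⟨fun i _ j hj hij => hπ.apply_lt_apply_of_le_apply hij hj.le,
      fun i hi j _ hij => hπ.apply_lt_apply_of_apply_le hij hi⟩
  · rintro ⟨hexc, hnon⟩ i j k hij hjk ⟨hji, hkj⟩
    by_cases hj : j < π j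
    · by_cases hi : i < π i
      · exact (hexc hi hj hij).not_gt hji
      by_cases hk : k < π k
      · exact (hexc hj hk hjk).not_gt hkj
      · exact (hnon (not_lt.1 hi) (not_lt.1 hk) (hij.trans hjk)).not_gt (hkj.trans hji)
    · by_cases hk : k < π k
      · exact (hkj.trans_le (not_lt.1 hj)).not_gt (hjk.trans hk)
      · exact (hnon (not_lt.1 hj) (not_lt.1 hk) hjk).not_gt hkj

theorem Avoids321.eq_of_excedances_eq (hπ : Avoids321 π) (hρ : Avoids321 ρ)
    (hS : excedances π = excedances ρ) (hT : excedanceValues π = excedanceValues ρ) :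
    π = ρ := by
  rw [avoids321_iff_strictMonoOn] at hπ hρ
  rw [← hS] at hρ
  have himage : π '' ↑(excedances π) = ρ '' ↑(excedances π) := by
    simpa [excedanceValues, hS] using congrArg ((↑) : Finset (Fin n) → Set (Fin n)) hT
  ext1 i
  by_cases hi : i ∈ excedances π
  · exact hπ.1.eqOn_of_image_eq hρ.1 himage hi
  · exact hπ.2.eqOn_of_image_eq hρ.2 (by rw [π.image_compl, ρ.image_compl, himage]) hi

theorem exists_avoids321_of_dominates {S T : Finset (Fin n)} (h : Dominates S T) :
    ∃ π : Perm (Fin n), Avoids321 π ∧ excedances π = S ∧ excedanceValues π = T := by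
  let e : S ≃o T := (S.orderIsoOfFin h.1).symm.trans (T.orderIsoOfFin rfl)
  let f : ↥Sᶜ ≃o ↥Tᶜ :=
    (Sᶜ.orderIsoOfFin (by simp [card_compl, h.1])).symm.trans (Tᶜ.orderIsoOfFin rfl)
  have he : ∀ s : S, (s : Fin n) < e s := lt_orderIso_apply e h.2
  have hf : ∀ c : ↥Sᶜ, (f c : Fin n) ≤ c := fun c => by
    simpa using le_orderIso_apply f.symm h.compl (f c)
  set π := piecewisePerm e.toEquiv f.toEquiv
  have hπS : ∀ x (hx : x ∈ S), π x = e ⟨x, hx⟩ := fun _ hx => piecewisePerm_apply_of_mem _ _ hx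
  have hπSc : ∀ x (hx : x ∉ S), π x = f ⟨x, mem_compl.2 hx⟩ := fun _ hx =>
    piecewisePerm_apply_of_notMem _ _ hx
  have hexc : excedances π = S := by
    ext x
    rw [mem_excedances]
    by_cases hx : x ∈ S
    · simpa [hx, hπS x hx] using he ⟨x, hx⟩
    · simpa [hx, hπSc x hx] using hf ⟨x, mem_compl.2 hx⟩
  refine ⟨π, ?_, hexc, ?_⟩
  · rw [avoids321_iff_strictMonoOn, hexc]
    constructor
    · intro x hx y hy hxy
      rw [hπS x hx, hπS y hy]
      exact e.strictMono (Subtype.mk_lt_mk.2 hxy)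
    · intro x hx y hy hxy
      rw [hπSc x hx, hπSc y hy]
      exact f.strictMono (Subtype.mk_lt_mk.2 hxy)
  · ext y
    rw [excedanceValues, hexc, mem_map]
    constructor
    · rintro ⟨x, hx, rfl⟩
      simp [hπS x hx]
    · intro hy
      refine ⟨e.symm ⟨y, hy⟩, (e.symm ⟨y, hy⟩).2, ?_⟩
      simp [hπS _ (e.symm ⟨y, hy⟩).2]

end Excedances

theorem card_avoids321_eq_catalan (n : ℕ) :
    Nat.card {π : Equiv.Perm (Fin n) // Avoids321 π} = catalan n := by
  rw [← DyckWord.card_dyckWord_semilength_eq_catalan, ← Nat.card_eq_fintype_card]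
  refine Nat.card_eq_of_bijective
    (fun π => ⟨dyckWordOfDominates (dominates_excedances π.1), semilength_dyckWordOfDominates _⟩)
    ⟨fun π ρ h => ?_, fun p => ?_⟩
  · obtain ⟨hS, hT⟩ := dyckEncode_inj.1 (congrArg (DyckWord.toList ∘ Subtype.val) h)
    exact Subtype.ext (π.2.eq_of_excedances_eq ρ.2 hS hT)
  · obtain ⟨p, hp⟩ := p
    obtain ⟨S, T, hST⟩ := exists_dyckEncode_eq (n := n) (w := p.toList)
      (by rw [← p.two_mul_semilength_eq_length, hp])
    have hdom : Dominates S T := (isDyckWord_dyckEncode_iff S T).1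
      (hST ▸ ⟨p.count_U_eq_count_D, p.count_D_le_count_U⟩)
    obtain ⟨π, hπ, rfl, rfl⟩ := exists_avoids321_of_dominates hdom
    exact ⟨⟨π, hπ⟩, Subtype.ext (DyckWord.ext hST)⟩
end

section
/- For every natural number n, there exists a bijection between the set of permutations of Fin n that avoid the pattern 312 and the set of permutations of Fin n that avoid the pattern 321. -/
/-!
Group permutations by their left-to-right maxima (positions and values). Each class contains
exactly one 312-avoider, its lexicographically largest element, and exactly one 321-avoider, its
lexicographically smallest element.

Existence: an occurrence `i < j < k` of 321 (resp. 312) is removed by swapping the entries at `j`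
and `k`; both entries stay below the entry at `i`, so the left-to-right maxima do not change, while
the permutation becomes lexicographically smaller (resp. larger).

Uniqueness: if `π <lex σ` have the same left-to-right maxima and first differ at `i`, then `i` is
not a left-to-right maximum, so some earlier common maximum `m` dominates `σ i`. The value `π i`
sits in `σ` after `i`, giving the 321 `m, i, σ⁻¹ (π i)` in `σ`; the value `σ i` sits in `π` after
`i`, giving the 312 `m, i, π⁻¹ (σ i)` in `π`.
-/

open Equiv

section LeftToRightMaxima

variable {α : Type*} [LinearOrder α]

def IsLTRMax (π : Perm α) (i : α) : Prop :=
  ∀ j < i, π j < π i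

def ltrMaxima (π : Perm α) : Set (α × α) :=
  {p | IsLTRMax π p.1 ∧ π p.1 = p.2}

theorem exists_isLTRMax_lt_of_not_isLTRMax [Finite α] {π : Perm α} {i : α}
    (hi : ¬ IsLTRMax π i) : ∃ m < i, IsLTRMax π m ∧ π i < π m := by
  obtain ⟨j, hji, hle⟩ : ∃ j < i, π i ≤ π j := by simpa [IsLTRMax] using hi
  have hlt : π i < π j := hle.lt_of_ne (π.injective.ne hji.ne')
  obtain ⟨m, hmi, hmax⟩ := Set.exists_max_image {t | t < i} π (Set.toFinite _) ⟨j, hji⟩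
  refine ⟨m, hmi, fun t htm => ?_, hlt.trans_le (hmax j hji)⟩
  exact (hmax t (htm.trans hmi)).lt_of_ne (π.injective.ne htm.ne)

theorem ltrMaxima_subset_of_forall_ne {π σ : Perm α} {m : α}
    (h : ∀ t, π t ≠ σ t → m < t ∧ π t < π m ∧ σ t < σ m) : ltrMaxima σ ⊆ ltrMaxima π := by
  have hm : π m = σ m := by
    by_contra hne
    exact (h m hne).2.1.false
  have hagree : ∀ t, IsLTRMax σ t → π t = σ t := by
    intro t ht
    by_contra hne
    obtain ⟨hmt, -, hσt⟩ := h t hne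
    exact (ht m hmt).asymm hσt
  rintro ⟨t, v⟩ ⟨ht, hv⟩
  refine ⟨fun s hs => ?_, (hagree t ht).trans hv⟩
  rw [hagree t ht]
  by_cases hs' : π s = σ s
  · exact hs' ▸ ht s hs
  · obtain ⟨hms, hπs, -⟩ := h s hs'
    exact hπs.trans (hm ▸ ht m (hms.trans hs))

theorem ltrMaxima_eq_of_forall_ne {π σ : Perm α} {m : α}
    (h : ∀ t, π t ≠ σ t → m < t ∧ π t < π m ∧ σ t < σ m) : ltrMaxima π = ltrMaxima σ :=
  (ltrMaxima_subset_of_forall_ne fun t ht =>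
    let ⟨hmt, hπ, hσ⟩ := h t (Ne.symm ht); ⟨hmt, hσ, hπ⟩).antisymm
    (ltrMaxima_subset_of_forall_ne h)

theorem ltrMaxima_mul_swap {π : Perm α} {m j k : α} (hmj : m < j) (hjk : j < k)
    (hj : π j < π m) (hk : π k < π m) : ltrMaxima (π * swap j k) = ltrMaxima π := by
  have hm : (π * swap j k) m = π m := by
    rw [Perm.mul_apply, swap_apply_of_ne_of_ne hmj.ne (hmj.trans hjk).ne]
  refine ltrMaxima_eq_of_forall_ne (m := m) fun t ht => ?_
  rw [hm]
  rcases eq_or_ne t j with rfl | htj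
  · simpa [hmj] using ⟨hk, hj⟩
  rcases eq_or_ne t k with rfl | htk
  · simpa [hmj.trans hjk] using ⟨hj, hk⟩
  · simp [swap_apply_of_ne_of_ne htj htk] at ht

theorem lt_symm_apply_of_forall_lt_eq {π σ : Perm α} {i : α} (hagree : ∀ t < i, π t = σ t)
    (hne : π i ≠ σ i) : i < σ.symm (π i) := by
  rcases lt_trichotomy (σ.symm (π i)) i with hlt | heq | hgt
  · have := hagree _ hlt
    rw [σ.apply_symm_apply, π.injective.eq_iff] at this
    exact absurd this hlt.ne
  · exact absurd (σ.eq_symm_apply.mp heq.symm).symm hne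
  · exact hgt

end LeftToRightMaxima

section Patterns

variable {n : ℕ}

theorem toLex_lt_toLex_mul_swap {π : Perm (Fin n)} {j k : Fin n} (hjk : j < k) (h : π j < π k) :
    toLex ⇑π < toLex ⇑(π * swap j k) := by
  refine ⟨j, fun t htj => ?_, by simpa using h⟩
  simp [swap_apply_of_ne_of_ne htj.ne (htj.trans hjk).ne]

theorem toLex_mul_swap_lt_toLex {π : Perm (Fin n)} {j k : Fin n} (hjk : j < k) (h : π k < π j) :
    toLex ⇑(π * swap j k) < toLex ⇑π := by
  simpa [mul_assoc] using toLex_lt_toLex_mul_swap (π := π * swap j k) hjk (by simpa using h)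

theorem exists_lt_isLTRMax_of_toLex_lt {π σ : Perm (Fin n)} (h : ltrMaxima π = ltrMaxima σ)
    (hlt : toLex ⇑π < toLex ⇑σ) :
    ∃ m i, m < i ∧ (∀ t < i, π t = σ t) ∧ π i < σ i ∧ σ i < σ m ∧ π m = σ m := by
  obtain ⟨i, hagree, hi⟩ := hlt
  have eq_of_isLTRMax : ∀ {t}, IsLTRMax σ t → π t = σ t := fun {t} hσt =>
    (show (t, σ t) ∈ ltrMaxima π from h ▸ ⟨hσt, rfl⟩).2
  obtain ⟨m, hmi, hσm, hm⟩ :=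
    exists_isLTRMax_lt_of_not_isLTRMax fun hσi => hi.ne (eq_of_isLTRMax hσi)
  exact ⟨m, i, hmi, hagree, hi, hm, eq_of_isLTRMax hσm⟩

theorem not_avoids321_of_toLex_lt {π σ : Perm (Fin n)} (h : ltrMaxima π = ltrMaxima σ)
    (hlt : toLex ⇑π < toLex ⇑σ) : ¬ Avoids321 σ := by
  obtain ⟨m, i, hmi, hagree, hi, hm, -⟩ := exists_lt_isLTRMax_of_toLex_lt h hlt
  refine fun hσ => hσ m i _ hmi (lt_symm_apply_of_forall_lt_eq hagree hi.ne) ⟨hm, ?_⟩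
  rwa [σ.apply_symm_apply]

theorem not_avoids312_of_toLex_lt {π σ : Perm (Fin n)} (h : ltrMaxima π = ltrMaxima σ)
    (hlt : toLex ⇑π < toLex ⇑σ) : ¬ Avoids312 π := by
  obtain ⟨m, i, hmi, hagree, hi, hm, hπm⟩ := exists_lt_isLTRMax_of_toLex_lt h hlt
  refine fun hπ => hπ m i _ hmi
    (lt_symm_apply_of_forall_lt_eq (fun t ht => (hagree t ht).symm) hi.ne') ?_
  rw [π.apply_symm_apply, hπm]
  exact ⟨hi, hm⟩

theorem injOn_ltrMaxima_avoids321 : Set.InjOn ltrMaxima {π : Perm (Fin n) | Avoids321 π} := by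
  intro π hπ σ hσ h
  rcases lt_trichotomy (toLex ⇑π) (toLex ⇑σ) with hlt | heq | hgt
  · exact absurd hσ (not_avoids321_of_toLex_lt h hlt)
  · exact DFunLike.coe_injective heq
  · exact absurd hπ (not_avoids321_of_toLex_lt h.symm hgt)

theorem injOn_ltrMaxima_avoids312 : Set.InjOn ltrMaxima {π : Perm (Fin n) | Avoids312 π} := by
  intro π hπ σ hσ h
  rcases lt_trichotomy (toLex ⇑π) (toLex ⇑σ) with hlt | heq | hgt
  · exact absurd hπ (not_avoids312_of_toLex_lt h hlt)
  · exact DFunLike.coe_injective heq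
  · exact absurd hσ (not_avoids312_of_toLex_lt h.symm hgt)

theorem exists_avoids321_ltrMaxima_eq (π : Perm (Fin n)) :
    ∃ σ, Avoids321 σ ∧ ltrMaxima σ = ltrMaxima π := by
  obtain ⟨σ, hσ, hmin⟩ := Set.exists_min_image {σ | ltrMaxima σ = ltrMaxima π}
    (fun σ : Perm (Fin n) => toLex ⇑σ) (Set.toFinite _) ⟨π, rfl⟩
  refine ⟨σ, fun i j k hij hjk ⟨hji, hkj⟩ => ?_, hσ⟩
  have hswap : ltrMaxima (σ * swap j k) = ltrMaxima π :=
    (ltrMaxima_mul_swap hij hjk hji (hkj.trans hji)).trans hσ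
  exact (hmin _ hswap).not_gt (toLex_mul_swap_lt_toLex hjk hkj)

theorem exists_avoids312_ltrMaxima_eq (π : Perm (Fin n)) :
    ∃ σ, Avoids312 σ ∧ ltrMaxima σ = ltrMaxima π := by
  obtain ⟨σ, hσ, hmax⟩ := Set.exists_max_image {σ | ltrMaxima σ = ltrMaxima π}
    (fun σ : Perm (Fin n) => toLex ⇑σ) (Set.toFinite _) ⟨π, rfl⟩
  refine ⟨σ, fun i j k hij hjk ⟨hjk', hki⟩ => ?_, hσ⟩
  have hswap : ltrMaxima (σ * swap j k) = ltrMaxima π :=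
    (ltrMaxima_mul_swap hij hjk (hjk'.trans hki) hki).trans hσ
  exact (hmax _ hswap).not_gt (toLex_lt_toLex_mul_swap hjk hjk')

theorem bijOn_ltrMaxima_avoids321 :
    Set.BijOn ltrMaxima {π : Perm (Fin n) | Avoids321 π} (Set.range ltrMaxima) :=
  ⟨fun π _ => ⟨π, rfl⟩, injOn_ltrMaxima_avoids321, fun _ ⟨π, hπ⟩ =>
    let ⟨σ, hσ, h⟩ := exists_avoids321_ltrMaxima_eq π; ⟨σ, hσ, h.trans hπ⟩⟩

theorem bijOn_ltrMaxima_avoids312 :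
    Set.BijOn ltrMaxima {π : Perm (Fin n) | Avoids312 π} (Set.range ltrMaxima) :=
  ⟨fun π _ => ⟨π, rfl⟩, injOn_ltrMaxima_avoids312, fun _ ⟨π, hπ⟩ =>
    let ⟨σ, hσ, h⟩ := exists_avoids312_ltrMaxima_eq π; ⟨σ, hσ, h.trans hπ⟩⟩

end Patterns

theorem exists_equiv_avoids312_avoids321 (n : ℕ) :
    Nonempty ({π : Equiv.Perm (Fin n) // Avoids312 π} ≃
      {π : Equiv.Perm (Fin n) // Avoids321 π}) :=
  ⟨(bijOn_ltrMaxima_avoids312.equiv _).trans (bijOn_ltrMaxima_avoids321.equiv _).symm⟩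
end

section
/- For every natural number n, there exists a bijection φ from the set of 312-avoiding permutations of Fin n to the set of 321-avoiding permutations of Fin n such that for every 312-avoiding permutation π, the permutations π and φ(π) have exactly the same left-to-right maxima: for every index i, i is a left-to-right maximum of π if and only if i is a left-to-right maximum of φ(π), and in that case π i = φ(π) i. -/
/-- An index `i` is a left-to-right maximum of `π` if `π j < π i` for all `j < i`. -/
def IsLRMax {n : ℕ} (π : Equiv.Perm (Fin n)) (i : Fin n) : Prop :=
  ∀ j : Fin n, j < i → π j < π i

noncomputable def Setoid.subtypeEquivQuotientOfUniqueRep {α : Type*} (s : Setoid α)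
    {P : α → Prop} (hex : ∀ a, ∃ x, P x ∧ a ≈ x) (huniq : ∀ x y, P x → P y → x ≈ y → x = y) :
    {x // P x} ≃ Quotient s :=
  Equiv.ofBijective (fun x => ⟦x.1⟧)
    ⟨fun x y hxy => Subtype.ext (huniq _ _ x.2 y.2 (Quotient.exact hxy)),
      Quotient.ind fun a => (hex a).elim fun x hx =>
        ⟨⟨x, hx.1⟩, Quotient.sound (Setoid.symm hx.2)⟩⟩

theorem Setoid.exists_equiv_subtype_of_unique_rep {α : Type*} (s : Setoid α) {P Q : α → Prop}
    (hP : ∀ a, ∃ x, P x ∧ a ≈ x) (hP' : ∀ x y, P x → P y → x ≈ y → x = y)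
    (hQ : ∀ a, ∃ x, Q x ∧ a ≈ x) (hQ' : ∀ x y, Q x → Q y → x ≈ y → x = y) :
    ∃ φ : {x // P x} ≃ {x // Q x}, ∀ x, x.1 ≈ (φ x).1 := by
  let eP := s.subtypeEquivQuotientOfUniqueRep hP hP'
  let eQ := s.subtypeEquivQuotientOfUniqueRep hQ hQ'
  exact ⟨eP.trans eQ.symm, fun x => Quotient.exact (eQ.apply_symm_apply (eP x)).symm⟩

open Equiv Equiv.Perm

section Records

variable {n : ℕ}

def SameRecords (σ τ : Perm (Fin n)) : Prop :=
  ∀ i, (IsLRMax σ i ↔ IsLRMax τ i) ∧ (IsLRMax σ i → σ i = τ i)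

def recordsSetoid (n : ℕ) : Setoid (Perm (Fin n)) where
  r := SameRecords
  iseqv :=
    { refl := fun _ _ => ⟨Iff.rfl, fun _ => rfl⟩
      symm := fun h i => ⟨(h i).1.symm, fun hi => ((h i).2 ((h i).1.2 hi)).symm⟩
      trans := fun h h' i =>
        ⟨(h i).1.trans (h' i).1, fun hi => ((h i).2 hi).trans ((h' i).2 ((h i).1.1 hi))⟩ }

lemma exists_lt_apply_lt_of_not_isLRMax {τ : Perm (Fin n)} {i : Fin n} (h : ¬IsLRMax τ i) :
    ∃ m < i, τ i < τ m := by
  simp only [IsLRMax, not_forall, not_lt] at h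
  obtain ⟨m, hmi, hle⟩ := h
  exact ⟨m, hmi, hle.lt_of_ne (τ.injective.ne hmi.ne')⟩

lemma mul_swap_apply_of_isLRMax {τ : Perm (Fin n)} {a b c i : Fin n} (hab : a < b)
    (hbc : b < c) (hb : τ b < τ a) (hc : τ c < τ a) (hi : IsLRMax τ i) :
    (τ * swap b c) i = τ i :=
  congrArg τ <| swap_apply_of_ne_of_ne (fun h => (hi a (h ▸ hab)).not_gt (h ▸ hb))
    (fun h => (hi a (h ▸ hab.trans hbc)).not_gt (h ▸ hc))

lemma isLRMax_mul_swap {τ : Perm (Fin n)} {a b c i : Fin n} (hab : a < b) (hbc : b < c)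
    (hb : τ b < τ a) (hc : τ c < τ a) (hi : IsLRMax τ i) : IsLRMax (τ * swap b c) i := by
  intro j hj
  rw [mul_swap_apply_of_isLRMax hab hbc hb hc hi, mul_apply]
  rcases eq_or_ne j b with rfl | hjb
  · rw [swap_apply_left]; exact hc.trans (hi a (hab.trans hj))
  rcases eq_or_ne j c with rfl | hjc
  · rw [swap_apply_right]; exact hb.trans (hi a (hab.trans (hbc.trans hj)))
  · rw [swap_apply_of_ne_of_ne hjb hjc]; exact hi j hj

lemma sameRecords_mul_swap {τ : Perm (Fin n)} {a b c : Fin n} (hab : a < b) (hbc : b < c)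
    (hb : τ b < τ a) (hc : τ c < τ a) : SameRecords τ (τ * swap b c) := by
  have hsa : swap b c a = a := swap_apply_of_ne_of_ne hab.ne (hab.trans hbc).ne
  have hback := @isLRMax_mul_swap _ (τ * swap b c) a b c
  simp only [mul_apply, hsa, swap_apply_left, swap_apply_right, mul_swap_mul_self] at hback
  exact fun i => ⟨⟨isLRMax_mul_swap hab hbc hb hc, hback hab hbc hc hb⟩,
    fun hi => (mul_swap_apply_of_isLRMax hab hbc hb hc hi).symm⟩

lemma toLex_mul_swap_lt {τ : Perm (Fin n)} {b c : Fin n} (hbc : b < c) (h : τ c < τ b) :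
    toLex ⇑(τ * swap b c) < toLex ⇑τ :=
  ⟨b, fun _ hj => congrArg τ (swap_apply_of_ne_of_ne hj.ne (hj.trans hbc).ne), by
    simpa only [Pi.toLex_apply, mul_apply, swap_apply_left] using h⟩

lemma exists_avoids321_sameRecords (π : Perm (Fin n)) :
    ∃ τ, Avoids321 τ ∧ SameRecords π τ := by
  have : Nonempty {τ // SameRecords π τ} := ⟨⟨π, (recordsSetoid n).refl π⟩⟩
  obtain ⟨⟨τ, hτ⟩, hmin⟩ := Finite.exists_min fun τ : {τ // SameRecords π τ} => toLex ⇑τ.1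
  refine ⟨τ, fun a b c hab hbc ⟨hb, hc⟩ => ?_, hτ⟩
  have hswap := (recordsSetoid n).trans hτ (sameRecords_mul_swap hab hbc hb (hc.trans hb))
  exact (hmin ⟨_, hswap⟩).not_gt (toLex_mul_swap_lt hbc hc)

lemma exists_avoids312_sameRecords (π : Perm (Fin n)) :
    ∃ τ, Avoids312 τ ∧ SameRecords π τ := by
  have : Nonempty {τ // SameRecords π τ} := ⟨⟨π, (recordsSetoid n).refl π⟩⟩
  obtain ⟨⟨τ, hτ⟩, hmax⟩ := Finite.exists_max fun τ : {τ // SameRecords π τ} => toLex ⇑τ.1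
  refine ⟨τ, fun a b c hab hbc ⟨hb, hc⟩ => ?_, hτ⟩
  have hswap := (recordsSetoid n).trans hτ (sameRecords_mul_swap hab hbc (hb.trans hc) hc)
  have hlt := toLex_mul_swap_lt (τ := τ * swap b c) hbc (by
    simpa only [mul_apply, swap_apply_left, swap_apply_right] using hb)
  rw [mul_swap_mul_self] at hlt
  exact (hmax ⟨_, hswap⟩).not_gt hlt

lemma exists_first_diff_of_toLex_lt {σ τ : Perm (Fin n)} (h : SameRecords σ τ)
    (hlt : toLex ⇑σ < toLex ⇑τ) : ∃ i, (∀ j < i, σ j = τ j) ∧ σ i < τ i ∧ ¬IsLRMax τ i :=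
  let ⟨i, hagree, hi⟩ := hlt
  ⟨i, hagree, hi, fun hr => hi.ne ((h i).2 ((h i).1.2 hr))⟩

lemma lt_symm_apply_of_agree {σ τ : Perm (Fin n)} {i : Fin n} (hagree : ∀ j < i, σ j = τ j)
    (hne : σ i ≠ τ i) : i < τ.symm (σ i) := by
  by_contra! hle
  rcases hle.lt_or_eq with hlt | heq
  · have := hagree _ hlt
    rw [apply_symm_apply] at this
    exact hlt.ne (σ.injective this)
  · exact hne ((τ.apply_symm_apply _).symm.trans (congrArg τ heq))

lemma Avoids321.not_toLex_lt {σ τ : Perm (Fin n)} (hτ : Avoids321 τ) (h : SameRecords σ τ) :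
    ¬toLex ⇑σ < toLex ⇑τ := fun hlt => by
  obtain ⟨i, hagree, hi, hrec⟩ := exists_first_diff_of_toLex_lt h hlt
  obtain ⟨m, hm, hτm⟩ := exists_lt_apply_lt_of_not_isLRMax hrec
  exact hτ m i _ hm (lt_symm_apply_of_agree hagree hi.ne) ⟨hτm, by rwa [apply_symm_apply]⟩

lemma Avoids312.not_toLex_lt {σ τ : Perm (Fin n)} (hσ : Avoids312 σ) (h : SameRecords σ τ) :
    ¬toLex ⇑σ < toLex ⇑τ := fun hlt => by
  obtain ⟨i, hagree, hi, hrec⟩ := exists_first_diff_of_toLex_lt h hlt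
  obtain ⟨m, hm, hτm⟩ := exists_lt_apply_lt_of_not_isLRMax hrec
  have hk := lt_symm_apply_of_agree (fun j hj => (hagree j hj).symm) hi.ne'
  exact hσ m i _ hm hk ⟨by rwa [apply_symm_apply], by rwa [apply_symm_apply, hagree m hm]⟩

lemma Avoids321.eq_of_sameRecords {σ τ : Perm (Fin n)} (hσ : Avoids321 σ)
    (hτ : Avoids321 τ) (h : SameRecords σ τ) : σ = τ :=
  DFunLike.coe_injective <| toLex_inj.mp <| le_antisymm
    (not_lt.1 (hσ.not_toLex_lt ((recordsSetoid n).symm h))) (not_lt.1 (hτ.not_toLex_lt h))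

lemma Avoids312.eq_of_sameRecords {σ τ : Perm (Fin n)} (hσ : Avoids312 σ)
    (hτ : Avoids312 τ) (h : SameRecords σ τ) : σ = τ :=
  DFunLike.coe_injective <| toLex_inj.mp <| le_antisymm
    (not_lt.1 (hτ.not_toLex_lt ((recordsSetoid n).symm h))) (not_lt.1 (hσ.not_toLex_lt h))

end Records

theorem exists_equiv_avoids312_avoids321_preserving_records (n : ℕ) :
    ∃ φ : {π : Equiv.Perm (Fin n) // Avoids312 π} ≃
        {π : Equiv.Perm (Fin n) // Avoids321 π},
      ∀ π : {π : Equiv.Perm (Fin n) // Avoids312 π}, ∀ i : Fin n,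
        (IsLRMax π.1 i ↔ IsLRMax (φ π).1 i) ∧
        (IsLRMax π.1 i → π.1 i = (φ π).1 i) :=
  (recordsSetoid n).exists_equiv_subtype_of_unique_rep exists_avoids312_sameRecords
    (fun _ _ => Avoids312.eq_of_sameRecords) exists_avoids321_sameRecords
    (fun _ _ => Avoids321.eq_of_sameRecords)
end

section
/- A permutation π of Fin n avoids the pattern 321 if and only if Fin n can be partitioned into two sets A and B such that π is strictly increasing on A and strictly increasing on B (i.e., π is an interleaving of two increasing subsequences). -/
/-!
The left-to-right maxima of `π` form an increasing subsequence. Every other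
entry `π i` lies below some earlier entry, so a later entry smaller than `π i` would complete a
321 pattern; hence the remaining entries increase as well. Conversely, of the three positions of
a 321 pattern, two would lie in the same increasing subsequence.
-/

open Function Set

variable {α β : Type*} [LinearOrder α] [LinearOrder β] {f : α → β}

def leftToRightMaxima (f : α → β) : Set α := {i | ∀ j < i, f j < f i}

theorem strictMonoOn_leftToRightMaxima : StrictMonoOn f (leftToRightMaxima f) :=
  fun _ _ _ hj hij => hj _ hij

theorem strictMonoOn_compl_leftToRightMaxima (hf : Injective f)
    (h : ∀ i j k, i < j → j < k → ¬(f j < f i ∧ f k < f j)) :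
    StrictMonoOn f (leftToRightMaxima f)ᶜ := by
  intro i hi j _ hij
  simp only [leftToRightMaxima, mem_compl_iff, mem_ofPred_eq, not_forall, not_lt] at hi
  obtain ⟨i', hi'i, hle⟩ := hi
  have hlt : f i < f i' := lt_of_le_of_ne hle (hf.ne hi'i.ne')
  by_contra! hji
  exact h i' i j hi'i hij ⟨hlt, lt_of_le_of_ne hji (hf.ne hij.ne')⟩

theorem not_decreasing_triple_of_strictMonoOn_union {A B : Set α} (hAB : A ∪ B = univ)
    (hA : StrictMonoOn f A) (hB : StrictMonoOn f B) {i j k : α} (hij : i < j) (hjk : j < k) :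
    ¬(f j < f i ∧ f k < f j) := by
  rintro ⟨hji, hkj⟩
  wlog hj : j ∈ A generalizing A B
  · have hj' : j ∈ B := (eq_univ_iff_forall.mp hAB j).resolve_left hj
    exact this (union_comm A B ▸ hAB) hB hA hj'
  have hi : i ∈ B := (eq_univ_iff_forall.mp hAB i).resolve_left
    fun hi => (hA hi hj hij).asymm hji
  have hk : k ∈ B := (eq_univ_iff_forall.mp hAB k).resolve_left
    fun hk => (hA hj hk hjk).asymm hkj
  exact (hB hi hk (hij.trans hjk)).asymm (hkj.trans hji)

theorem avoids321_iff_interleaving (n : ℕ) (π : Equiv.Perm (Fin n)) :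
    Avoids321 π ↔
      ∃ A B : Set (Fin n), A ∪ B = Set.univ ∧ A ∩ B = ∅ ∧
        (∀ i ∈ A, ∀ j ∈ A, i < j → π i < π j) ∧
        (∀ i ∈ B, ∀ j ∈ B, i < j → π i < π j) := by
  constructor
  · intro h
    exact ⟨leftToRightMaxima π, (leftToRightMaxima π)ᶜ, union_compl_self _, inter_compl_self _,
      strictMonoOn_leftToRightMaxima, strictMonoOn_compl_leftToRightMaxima π.injective h⟩
  · rintro ⟨A, B, hAB, -, hA, hB⟩ i j k hij hjk
    exact not_decreasing_triple_of_strictMonoOn_union hAB hA hB hij hjk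
end

section
/- A permutation π of Fin n avoids the pattern 321 if and only if π is strictly increasing on the set of indices that are not left-to-right maxima of π, i.e., for all indices i < j such that neither i nor j is a left-to-right maximum of π, one has π i < π j. -/
/-
A non-record `j` has some `i < j` with `π j < π i`. Hence a descent `π k < π j` between two
non-records `j < k` extends to a 321 pattern `i, j, k`; conversely, the last two entries of a
321 pattern are non-records forming a descent.
-/

theorem not_isLRMax_iff {n : ℕ} {π : Equiv.Perm (Fin n)} {j : Fin n} :
    ¬IsLRMax π j ↔ ∃ i < j, π j < π i := by
  simp only [IsLRMax, not_forall, not_lt, exists_prop]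
  refine exists_congr fun i => and_congr_right fun hij => ?_
  exact le_iff_lt_or_eq.trans <| or_iff_left <| (π.injective.ne hij.ne).symm

theorem not_isLRMax_of_lt {n : ℕ} {π : Equiv.Perm (Fin n)} {i j : Fin n} (hij : i < j)
    (hπ : π j < π i) : ¬IsLRMax π j :=
  not_isLRMax_iff.2 ⟨i, hij, hπ⟩

theorem avoids321_iff_nonrecords_increasing (n : ℕ) (π : Equiv.Perm (Fin n)) :
    Avoids321 π ↔
      ∀ i j : Fin n, i < j → ¬IsLRMax π i → ¬IsLRMax π j → π i < π j := by
  constructor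
  · intro hπ j k hjk hj _
    obtain ⟨i, hij, hji⟩ := not_isLRMax_iff.1 hj
    refine lt_of_le_of_ne (not_lt.1 fun hkj => hπ i j k hij hjk ⟨hji, hkj⟩) ?_
    exact π.injective.ne hjk.ne
  · intro hπ i j k hij hjk ⟨hji, hkj⟩
    exact (hπ j k hjk (not_isLRMax_of_lt hij hji) (not_isLRMax_of_lt hjk hkj)).asymm hkj
end

section
/- Cycle lemma: for every natural number n and every list w of length 2n+1 consisting of exactly n+1 entries equal to 1 and n entries equal to -1 (as integers), there is exactly one rotation amount r with 0 ≤ r < 2n+1 such that every nonempty prefix of the cyclic rotation of w by r has positive sum. -/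
/-!
The entries are `±1` with one more `1`, so the total sum is `1`; Raney's lemma then applies to
any integer list with sum `1`. Write `P k` for the sum of the first `k` entries and
`m = w.length`, so `P m = 1`. The prefix sums of the rotation by `r` are `P i - P r` for
`r < i ≤ m`, followed by `1 - P r + P i` for `i ≤ r`. Being integers, they are all positive
exactly when `r` is the last point of `[0, m)` at which `P` attains its minimum, and there is
exactly one such point.
-/

namespace List

theorem count_add_count_le_length {α : Type*} [DecidableEq α] {a b : α} (hab : a ≠ b)
    (l : List α) : l.count a + l.count b ≤ l.length := by
  induction l with
  | nil => simp
  | cons c l ih =>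
    simp only [count_cons, length_cons, beq_iff_eq]
    split_ifs with ha hb <;> first | omega | exact absurd (ha.symm.trans hb) hab

theorem sum_eq_count_one_sub_count_neg_one {l : List ℤ}
    (h : l.count 1 + l.count (-1) = l.length) : l.sum = l.count 1 - l.count (-1) := by
  induction l with
  | nil => simp
  | cons a l ih =>
    obtain rfl | rfl | ⟨ha₁, ha₂⟩ : a = 1 ∨ a = -1 ∨ (a ≠ 1 ∧ a ≠ -1) := by omega
    · rw [count_cons_self, count_cons_of_ne (by decide), length_cons] at h
      rw [count_cons_self, count_cons_of_ne (by decide), sum_cons, ih (by omega)]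
      push_cast; ring
    · rw [count_cons_self, count_cons_of_ne (by decide), length_cons] at h
      rw [count_cons_self, count_cons_of_ne (by decide), sum_cons, ih (by omega)]
      push_cast; ring
    · rw [count_cons_of_ne ha₁, count_cons_of_ne ha₂, length_cons] at h
      have := count_add_count_le_length (show (1 : ℤ) ≠ -1 by decide) l
      omega

theorem forall_prefix_ne_nil_iff_forall_take {α : Type*} (l : List α) (P : List α → Prop) :
    (∀ p, p <+: l → p ≠ [] → P p) ↔ ∀ j, 0 < j → j ≤ l.length → P (l.take j) := by
  refine ⟨fun h j hj hjl => h _ (take_prefix j l) ?_, fun h p hp hne => ?_⟩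
  · rw [← length_pos_iff, length_take]; omega
  · rw [prefix_iff_eq_take.mp hp]
    exact h _ (length_pos_iff.mpr hne) hp.length_le

section RotateSum

variable {M : Type*} [AddCommGroup M] {l : List M} {r : ℕ}

theorem sum_take_drop_append_take (j : ℕ) (h : r + j ≤ l.length) :
    ((l.drop r ++ l.take r).take j).sum = (l.take (r + j)).sum - (l.take r).sum := by
  rw [take_append_of_le_length (by simp; omega), take_add, sum_append, add_sub_cancel_left]

theorem sum_take_length_sub_add_drop_append_take {i : ℕ} (hi : i ≤ r) :
    ((l.drop r ++ l.take r).take (l.length - r + i)).sum =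
      l.sum - (l.take r).sum + (l.take i).sum := by
  rw [← length_drop, take_length_add_append, take_take, min_eq_left hi, sum_append,
    ← sum_take_add_sum_drop l r, add_sub_cancel_left]

end RotateSum

theorem forall_prefix_rotate_sum_pos_iff {w : List ℤ} {r : ℕ} (hw : w.sum = 1)
    (hr : r < w.length) :
    (∀ p, p <+: w.rotate r → p ≠ [] → 0 < p.sum) ↔
      (∀ i ≤ r, (w.take r).sum ≤ (w.take i).sum) ∧
        ∀ i, r < i → i < w.length → (w.take r).sum < (w.take i).sum := by
  rw [forall_prefix_ne_nil_iff_forall_take, length_rotate, rotate_eq_drop_append_take hr.le]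
  constructor
  · intro h
    refine ⟨fun i hi => ?_, fun i hri hi => ?_⟩
    · have := h (w.length - r + i) (by omega) (by omega)
      rw [sum_take_length_sub_add_drop_append_take hi, hw] at this
      omega
    · have := h (i - r) (by omega) (by omega)
      rw [sum_take_drop_append_take _ (by omega), Nat.add_sub_cancel' hri.le] at this
      omega
  · rintro ⟨hle, hlt⟩ j hj hjl
    by_cases hwrap : r + j < w.length
    · rw [sum_take_drop_append_take j hwrap.le]
      have := hlt (r + j) (by omega) hwrap
      omega
    · obtain ⟨i, rfl⟩ : ∃ i, j = w.length - r + i := ⟨j - (w.length - r), by omega⟩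
      rw [sum_take_length_sub_add_drop_append_take (by omega), hw]
      have := hle i (by omega)
      omega

end List

theorem existsUnique_last_argmin {α : Type*} [LinearOrder α] (f : ℕ → α) {m : ℕ} (hm : 0 < m) :
    ∃! r, r < m ∧ (∀ i ≤ r, f r ≤ f i) ∧ ∀ i, r < i → i < m → f r < f i := by
  obtain ⟨i₀, hi₀, hmin⟩ := (Finset.range m).exists_min_image f ⟨0, Finset.mem_range.mpr hm⟩
  set S := (Finset.range m).filter (fun i => f i = f i₀)
  have hS : S.Nonempty := ⟨i₀, Finset.mem_filter.mpr ⟨hi₀, rfl⟩⟩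
  obtain ⟨hrm, hr⟩ := Finset.mem_filter.mp (S.max'_mem hS)
  rw [Finset.mem_range] at hrm
  have hle : ∀ i ≤ S.max' hS, f (S.max' hS) ≤ f i := fun i hi =>
    hr ▸ hmin i (Finset.mem_range.mpr (by omega))
  have hlt : ∀ i, S.max' hS < i → i < m → f (S.max' hS) < f i := fun i hri hi =>
    lt_of_le_of_ne (hr ▸ hmin i (Finset.mem_range.mpr hi)) fun h => hri.not_ge <|
      S.le_max' i (Finset.mem_filter.mpr ⟨Finset.mem_range.mpr hi, hr ▸ h.symm⟩)
  refine ⟨S.max' hS, ⟨hrm, hle, hlt⟩, fun r ⟨hr', hle', hlt'⟩ => ?_⟩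
  rcases lt_trichotomy r (S.max' hS) with h | h | h
  · exact absurd (hle r h.le) (hlt' _ h hrm).not_ge
  · exact h
  · exact absurd (hle' _ h.le) (hlt r h hr').not_ge

theorem List.existsUnique_forall_prefix_rotate_sum_pos {w : List ℤ} (hw : w.sum = 1) :
    ∃! r, r < w.length ∧ ∀ p, p <+: w.rotate r → p ≠ [] → 0 < p.sum := by
  have hpos : 0 < w.length := length_pos_iff.mpr (by rintro rfl; simp at hw)
  refine (existsUnique_congr fun r => and_congr_right fun hr => ?_).mp
    (existsUnique_last_argmin (fun k => (w.take k).sum) hpos)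
  exact (forall_prefix_rotate_sum_pos_iff hw hr).symm

theorem cycle_lemma (n : ℕ) (w : List ℤ)
    (hlen : w.length = 2 * n + 1)
    (h1 : w.count 1 = n + 1) (h2 : w.count (-1) = n) :
    ∃! r : ℕ, r < 2 * n + 1 ∧
      ∀ p : List ℤ, p <+: (w.drop r ++ w.take r) → p ≠ [] → 0 < p.sum := by
  have hsum : w.sum = 1 := by
    rw [List.sum_eq_count_one_sub_count_neg_one (by omega), h1, h2]; push_cast; ring
  rw [← hlen]
  refine (existsUnique_congr fun r => and_congr_right fun hr => ?_).mp
    (List.existsUnique_forall_prefix_rotate_sum_pos hsum)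
  rw [List.rotate_eq_drop_append_take hr.le]
end

section
/- For every natural number n, the number of peakless weak Dyck paths of size n — that is, lists w with entries in {1, 0, -1} (as integers) such that the total sum of w is 0, every prefix sum of w is nonnegative, no entry equal to 1 is immediately followed by an entry equal to -1, and the number of entries equal to 1 plus the number of entries equal to 0 equals n — is the n-th Catalan number. -/
/-- A peakless weak Dyck path of size `n`: a list with entries in `{1, 0, -1} ⊆ ℤ`,
total sum `0`, all prefix sums nonnegative, no entry `1` immediately followed by `-1`,
and (number of `1`s) + (number of `0`s) equal to `n`. -/
def IsPeaklessWeakDyckPath (n : ℕ) (w : List ℤ) : Prop :=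
  (∀ x ∈ w, x = 1 ∨ x = 0 ∨ x = -1) ∧
  w.sum = 0 ∧
  (∀ p : List ℤ, p <+: w → 0 ≤ p.sum) ∧
  (∀ i : ℕ, ¬(w[i]? = some 1 ∧ w[i + 1]? = some (-1))) ∧
  w.count 1 + w.count 0 = n

/-!
Replacing the steps `1`, `0`, `-1` by `U`, `UD`, `D` turns a peakless weak Dyck path of size `n`
into a Dyck word of semilength `n`: prefix sums become heights at block boundaries, and the only
new prefixes end inside a `UD` block, one step above a boundary. Since a path has no `1` followed
by `-1`, every `UD` factor of the image comes from a `0`, so collapsing `UD` factors back to `0`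
inverts the map, and the count is that of Dyck words of semilength `n`, which is `catalan n`.
-/

open List DyckStep

namespace PeaklessWeakDyckPath

def expandStep (a : ℤ) : List DyckStep :=
  if a = 1 then [U] else if a = 0 then [U, D] else [D]

@[simp] lemma expandStep_one : expandStep 1 = [U] := rfl
@[simp] lemma expandStep_zero : expandStep 0 = [U, D] := rfl
@[simp] lemma expandStep_neg_one : expandStep (-1) = [D] := rfl

lemma prefix_expandStep {p : List DyckStep} {a : ℤ} (h : p <+: expandStep a) :
    p = [] ∨ p = [U] ∨ p = expandStep a := by
  unfold expandStep at *
  split_ifs at * <;> simp only [prefix_cons_iff, prefix_nil] at h <;> aesop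

def expand (w : List ℤ) : List DyckStep := w.flatMap expandStep

@[simp] lemma expand_nil : expand [] = [] := rfl
@[simp] lemma expand_cons (a : ℤ) (w : List ℤ) : expand (a :: w) = expandStep a ++ expand w :=
  flatMap_cons

lemma expand_append (v w : List ℤ) : expand (v ++ w) = expand v ++ expand w := flatMap_append

lemma expand_prefix_expand {v w : List ℤ} (h : v <+: w) : expand v <+: expand w := by
  obtain ⟨t, rfl⟩ := h
  exact ⟨expand t, (expand_append v t).symm⟩

lemma count_U_expand (w : List ℤ) : (expand w).count U = w.count 1 + w.count 0 := by
  induction w with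
  | nil => rfl
  | cons a w ih =>
    simp only [expand_cons, count_append, ih, count_cons, expandStep]
    split_ifs <;> simp_all <;> omega

lemma count_U_sub_count_D_expand {w : List ℤ} (hw : ∀ x ∈ w, x = 1 ∨ x = 0 ∨ x = -1) :
    ((expand w).count U : ℤ) - (expand w).count D = w.sum := by
  induction w with
  | nil => rfl
  | cons a w ih =>
    rw [forall_mem_cons] at hw
    rcases hw.1 with rfl | rfl | rfl <;> simp [← ih hw.2] <;> ring

lemma exists_prefix_of_prefix_expand {p : List DyckStep} {w : List ℤ} (h : p <+: expand w) :
    ∃ q, q <+: w ∧ (p = expand q ∨ p = expand q ++ [U]) := by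
  induction w generalizing p with
  | nil => exact ⟨[], prefix_rfl, .inl (prefix_nil.mp h)⟩
  | cons a w ih =>
    rw [expand_cons] at h
    rcases prefix_or_prefix_of_prefix h (prefix_append _ _) with hp | ⟨t, rfl⟩
    · rcases prefix_expandStep hp with rfl | rfl | rfl
      · exact ⟨[], nil_prefix, .inl rfl⟩
      · exact ⟨[], nil_prefix, .inr rfl⟩
      · exact ⟨[a], by simp, .inl (by simp)⟩
    · obtain ⟨q, hq, hpq⟩ := ih ((prefix_append_right_inj _).mp h)
      refine ⟨a :: q, cons_prefix_cons.mpr ⟨rfl, hq⟩, ?_⟩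
      rcases hpq with rfl | rfl <;> simp

def collapse : List DyckStep → List ℤ
  | [] => []
  | U :: D :: l => 0 :: collapse l
  | U :: l => 1 :: collapse l
  | D :: l => -1 :: collapse l

lemma collapse_U_cons {l : List DyckStep} (h : ∀ t, l ≠ D :: t) :
    collapse (U :: l) = 1 :: collapse l := by
  match l, h with
  | [], _ => rfl
  | U :: _, _ => rfl
  | D :: t, h => exact absurd rfl (h t)

@[simp] lemma collapse_D_cons (l : List DyckStep) : collapse (D :: l) = -1 :: collapse l := by
  cases l <;> rfl

@[simp] lemma expand_collapse (l : List DyckStep) : expand (collapse l) = l := by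
  induction l using collapse.induct with
  | case1 => rfl
  | case2 l ih => simp [collapse, ih]
  | case3 l h ih => simp [collapse_U_cons h, ih]
  | case4 l ih => simp [ih]

lemma mem_collapse {l : List DyckStep} : ∀ x ∈ collapse l, x = 1 ∨ x = 0 ∨ x = -1 := by
  induction l using collapse.induct with
  | case1 => simp [collapse]
  | case2 l ih => simpa [collapse] using ih
  | case3 l h ih => simpa [collapse_U_cons h] using ih
  | case4 l ih => simpa using ih

def Peakless (w : List ℤ) : Prop := w.IsChain fun a b => ¬(a = 1 ∧ b = -1)

lemma peakless_iff_getElem? {w : List ℤ} :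
    Peakless w ↔ ∀ i : ℕ, ¬(w[i]? = some 1 ∧ w[i + 1]? = some (-1)) := by
  rw [Peakless, isChain_iff_getElem]
  constructor
  · rintro h i ⟨h1, h2⟩
    obtain ⟨hi, h2⟩ := List.getElem?_eq_some_iff.mp h2
    exact h i hi ⟨by simpa [Nat.lt_of_succ_lt hi] using h1, h2⟩
  · rintro h i hi ⟨h1, h2⟩
    exact h i ⟨by simp [h1, Nat.lt_of_succ_lt hi], by simp [h2, hi]⟩

lemma peakless_collapse (l : List DyckStep) : Peakless (collapse l) := by
  induction l using collapse.induct with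
  | case1 => exact .nil
  | case2 l ih => exact isChain_cons.mpr ⟨by simp, ih⟩
  | case3 l h ih =>
    rw [Peakless, collapse_U_cons h, isChain_cons]
    refine ⟨fun y hy ⟨_, hy'⟩ => ?_, ih⟩
    obtain ⟨s, hs⟩ := head?_eq_some_iff.mp (hy' ▸ hy)
    exact h (expand s) (by rw [← expand_collapse l, hs, expand_cons, expandStep_neg_one]; rfl)
  | case4 l ih => exact isChain_cons.mpr ⟨by simp, ih⟩

lemma expand_ne_D_cons {w : List ℤ} (hw : ∀ x ∈ w, x = 1 ∨ x = 0 ∨ x = -1)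
    (h : w.head? ≠ some (-1)) (s : List DyckStep) : expand w ≠ D :: s := by
  rcases w with _ | ⟨b, w⟩
  · simp
  · rcases hw b mem_cons_self with rfl | rfl | rfl <;> simp_all

lemma collapse_expand {w : List ℤ} (hw : ∀ x ∈ w, x = 1 ∨ x = 0 ∨ x = -1) (hp : Peakless w) :
    collapse (expand w) = w := by
  induction w with
  | nil => rfl
  | cons a w ih =>
    rw [forall_mem_cons] at hw
    rw [Peakless, isChain_cons] at hp
    have ih := ih hw.2 hp.2
    rcases hw.1 with rfl | rfl | rfl
    · have : w.head? ≠ some (-1) := fun h => hp.1 _ h ⟨rfl, rfl⟩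
      simp [collapse_U_cons (expand_ne_D_cons hw.2 this), ih]
    · simp [collapse, ih]
    · simp [ih]

end PeaklessWeakDyckPath

open PeaklessWeakDyckPath

namespace IsPeaklessWeakDyckPath

variable {n : ℕ} {w : List ℤ}

def toDyckWord (h : IsPeaklessWeakDyckPath n w) : DyckWord where
  toList := expand w
  count_U_eq_count_D := by
    have := count_U_sub_count_D_expand h.1
    rw [h.2.1] at this
    omega
  count_D_le_count_U i := by
    obtain ⟨q, hq, hpq⟩ := exists_prefix_of_prefix_expand (take_prefix i (expand w))
    have hsum := count_U_sub_count_D_expand fun x hx => h.1 x (hq.subset hx)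
    have := h.2.2.1 q hq
    rcases hpq with hpq | hpq <;> simp [hpq] <;> omega

lemma semilength_toDyckWord (h : IsPeaklessWeakDyckPath n w) : h.toDyckWord.semilength = n :=
  (count_U_expand w).trans h.2.2.2.2

end IsPeaklessWeakDyckPath

lemma DyckWord.isPeaklessWeakDyckPath_collapse (p : DyckWord) :
    IsPeaklessWeakDyckPath p.semilength (collapse p.toList) := by
  have hsum := count_U_sub_count_D_expand (mem_collapse (l := p.toList))
  rw [expand_collapse] at hsum
  refine ⟨mem_collapse, ?_, fun q hq => ?_, peakless_iff_getElem?.mp (peakless_collapse _), ?_⟩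
  · rw [← hsum, p.count_U_eq_count_D, sub_self]
  · have hpre : expand q <+: p.toList := expand_collapse p.toList ▸ expand_prefix_expand hq
    have := p.count_D_le_count_U (expand q).length
    rw [← prefix_iff_eq_take.mp hpre] at this
    rw [← count_U_sub_count_D_expand fun x hx => mem_collapse x (hq.subset hx)]
    omega
  · rw [← count_U_expand, expand_collapse]
    rfl

def IsPeaklessWeakDyckPath.equivDyckWord (n : ℕ) :
    {w : List ℤ // IsPeaklessWeakDyckPath n w} ≃ {p : DyckWord // p.semilength = n} where
  toFun w := ⟨w.2.toDyckWord, w.2.semilength_toDyckWord⟩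
  invFun p := ⟨collapse p.1.toList, by
    obtain ⟨p, rfl⟩ := p
    exact p.isPeaklessWeakDyckPath_collapse⟩
  left_inv w := Subtype.ext (collapse_expand w.2.1 (peakless_iff_getElem?.mpr w.2.2.2.2.1))
  right_inv p := Subtype.ext (DyckWord.ext (expand_collapse _))

theorem card_peaklessWeakDyckPath_eq_catalan (n : ℕ) :
    Nat.card {w : List ℤ // IsPeaklessWeakDyckPath n w} = catalan n := by
  rw [Nat.card_congr (IsPeaklessWeakDyckPath.equivDyckWord n), Nat.card_eq_fintype_card,
    DyckWord.card_dyckWord_semilength_eq_catalan]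
end

section
/- A 312-avoiding permutation of Fin n is uniquely determined by its left-to-right maxima: if π and σ are permutations of Fin n that both avoid the pattern 312, every index i is a left-to-right maximum of π if and only if it is a left-to-right maximum of σ, and π and σ agree on all left-to-right maxima, then π = σ. -/
/-!
Induct on the position `i`. At a record the values agree by hypothesis. Otherwise some earlier
position `m` has a larger value, and 312-avoidance forces every value strictly between `π i` and
`π m` to occur before `i`. So if `π` and `σ` agree before `i` and, say, `σ i < π i`, then `π i`
would be taken by `σ` (hence by `π`) at an earlier position, contradicting injectivity.
-/

section

variable {n : ℕ} {π σ : Equiv.Perm (Fin n)} {i j : Fin n}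

theorem exists_lt_apply_lt_of_not_isLRMax_s10 (hi : ¬IsLRMax π i) : ∃ j < i, π i < π j := by
  simp only [IsLRMax, not_forall, not_lt] at hi
  obtain ⟨j, hj, hle⟩ := hi
  exact ⟨j, hj, hle.lt_of_ne fun h => hj.ne' (π.injective h)⟩

theorem Avoids312.exists_lt_apply_eq (hπ : Avoids312 π) {u : Fin n} (hj : j < i)
    (hiu : π i < u) (huj : u < π j) : ∃ k < i, π k = u := by
  refine ⟨π.symm u, ?_, π.apply_symm_apply u⟩
  by_contra! hk
  have hne : i ≠ π.symm u := by
    rintro rfl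
    exact hiu.ne (π.apply_symm_apply u)
  exact hπ j i _ hj (hk.lt_of_ne hne) ⟨by simpa using hiu, by simpa using huj⟩

theorem Avoids312.le_apply_of_not_isLRMax (hσ : Avoids312 σ) (hi : ¬IsLRMax π i)
    (hagree : ∀ j < i, π j = σ j) : π i ≤ σ i := by
  by_contra! hlt
  obtain ⟨m, hm, hmi⟩ := exists_lt_apply_lt_of_not_isLRMax_s10 hi
  obtain ⟨k, hk, hk_eq⟩ := hσ.exists_lt_apply_eq hm hlt (hagree m hm ▸ hmi)
  exact hk.ne (π.injective (by rw [hagree k hk, hk_eq]))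

end

theorem avoids312_determined_by_records {n : ℕ} (π σ : Equiv.Perm (Fin n))
    (hπ : Avoids312 π) (hσ : Avoids312 σ)
    (hrec : ∀ i : Fin n, IsLRMax π i ↔ IsLRMax σ i)
    (hval : ∀ i : Fin n, IsLRMax π i → π i = σ i) :
    π = σ := by
  ext1 i
  induction i using WellFoundedLT.induction with
  | _ i ih =>
    by_cases hi : IsLRMax π i
    · exact hval i hi
    · exact le_antisymm (hσ.le_apply_of_not_isLRMax hi ih)
        (hπ.le_apply_of_not_isLRMax (mt (hrec i).mpr hi) fun j hj => (ih j hj).symm)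
end

section
/- A 321-avoiding permutation of Fin n is uniquely determined by its left-to-right maxima: if π and σ are permutations of Fin n that both avoid the pattern 321, every index i is a left-to-right maximum of π if and only if it is a left-to-right maximum of σ, and π and σ agree on all left-to-right maxima, then π = σ. -/
theorem Equiv.Perm.eq_of_eqOn_compl_of_strictMonoOn {α : Type*} [LinearOrder α]
    [WellFoundedLT α] {f g : Equiv.Perm α} {s : Set α} (hfg : Set.EqOn f g sᶜ)
    (hf : StrictMonoOn f s) (hg : StrictMonoOn g s) : f = g := by
  have himage : f '' s = g '' s := by
    rw [← compl_inj_iff, ← Equiv.image_compl, ← Equiv.image_compl, hfg.image_eq]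
  have hrestrict : s.domRestrict f = s.domRestrict g := by
    rwa [← hf.domRestrict.range_inj hg.domRestrict, Set.range_domRestrict, Set.range_domRestrict]
  ext a : 1
  by_cases ha : a ∈ s
  · exact congrFun hrestrict ⟨a, ha⟩
  · exact hfg ha

theorem Avoids321.strictMonoOn_not_isLRMax {n : ℕ} {π : Equiv.Perm (Fin n)} (hπ : Avoids321 π) :
    StrictMonoOn π {i | ¬IsLRMax π i} := by
  intro i hi j _ hij
  obtain ⟨k, hki, hik⟩ : ∃ k < i, π i < π k := by
    simp only [Set.mem_ofPred_eq, IsLRMax, not_forall, not_lt, exists_prop] at hi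
    obtain ⟨k, hki, hik⟩ := hi
    exact ⟨k, hki, hik.lt_of_ne (π.injective.ne hki.ne')⟩
  by_contra! hji
  exact hπ k i j hki hij ⟨hik, hji.lt_of_ne (π.injective.ne hij.ne')⟩

theorem avoids321_determined_by_records {n : ℕ} (π σ : Equiv.Perm (Fin n))
    (hπ : Avoids321 π) (hσ : Avoids321 σ)
    (hrec : ∀ i : Fin n, IsLRMax π i ↔ IsLRMax σ i)
    (hval : ∀ i : Fin n, IsLRMax π i → π i = σ i) :
    π = σ := by
  have hσ' : StrictMonoOn σ {i | ¬IsLRMax π i} := by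
    simpa only [hrec] using hσ.strictMonoOn_not_isLRMax
  exact Equiv.Perm.eq_of_eqOn_compl_of_strictMonoOn (fun i hi => hval i (not_not.mp hi))
    hπ.strictMonoOn_not_isLRMax hσ'
end
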